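/- arXiv:2502.00522 — 2 statements merged into one kernel-verified Lean document; each statement's English description precedes it below -/
import Mathlib

section
/- Let H be symmetric positive definite with eigenvalues in (0, L], γ ∈ (0, 2/L), G = I − γH with smallest eigenvalue η_min > −1, and a, b ∈ [0,1) satisfying (2(b−a) − 1)/(1 + 2b) < η_min. Then the spectral radius of M = [[(a−b)I + (1+b)G, −(a−b)I − bG], [I, 0]] satisfies ρ(M) < 1. -/
/-!
If `M (x, y) = σ (x, y)` then `x = σ y` and
`(σ² - (a - b) σ + (a - b)) y = ((1 + b) σ - b) G y`, so every eigenvalue `σ` of `M` is a root of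
`σ² - s σ + p` with `s = (a - b) + (1 + b) η`, `p = (a - b) + b η` for some eigenvalue `η` of the
symmetric matrix `G`, which is real. Both roots of such a real quadratic lie in the open unit disc
as soon as `p < 1` and `|s| < 1 + p` (the Schur–Cohn conditions). Here `p < a < 1`,
`1 - s + p = 1 - η > 0` because `H` has positive spectrum, and `1 + s + p > 0` is exactly the
hypothesis `(2(b - a) - 1) / (1 + 2b) < η_min ≤ η`.
-/

open Matrix Pointwise

theorem norm_lt_one_of_sq_sub_mul_add_eq_zero {s p : ℝ} (hp : p < 1) (h₁ : 0 < 1 - s + p)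
    (h₂ : 0 < 1 + s + p) {z : ℂ} (hz : z ^ 2 - s * z + p = 0) : ‖z‖ < 1 := by
  have hre : z.re ^ 2 - z.im ^ 2 - s * z.re + p = 0 := by
    simpa [sq] using congrArg Complex.re hz
  have him : z.im * (2 * z.re - s) = 0 := by
    have := congrArg Complex.im hz
    simp only [sq, Complex.sub_im, Complex.add_im, Complex.mul_im, Complex.ofReal_re,
      Complex.ofReal_im, Complex.zero_im] at this
    linear_combination this
  rcases mul_eq_zero.1 him with hy | hx
  · rw [hy] at hre
    rw [← Complex.re_add_im z, hy, Complex.ofReal_zero, zero_mul, add_zero, Complex.norm_real,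
      Real.norm_eq_abs, abs_lt]
    constructor <;> nlinarith
  · -- A non-real root has real part `s / 2`; it and its conjugate are the two roots, so `‖z‖² = p`.
    have : ‖z‖ ^ 2 = p := by rw [Complex.sq_norm, Complex.normSq_apply]; nlinarith
    nlinarith [norm_nonneg z]

theorem spectralRadius_lt_of_forall_nnnorm_lt {𝕜 A : Type*} [NormedField 𝕜] [Ring A]
    [Algebra 𝕜 A]
    {a : A} (ha : (spectrum 𝕜 a).Finite) {r : NNReal} (hr : 0 < r)
    (h : ∀ k ∈ spectrum 𝕜 a, ‖k‖₊ < r) : spectralRadius 𝕜 a < r :=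
  calc spectralRadius 𝕜 a ≤ (ha.toFinset.sup (‖·‖₊) : NNReal) :=
        iSup₂_le fun _ hk => ENNReal.coe_le_coe.2 (Finset.le_sup (ha.mem_toFinset.2 hk))
    _ < r := ENNReal.coe_lt_coe.2 <|
        (Finset.sup_lt_iff hr).2 fun k hk => h k (ha.mem_toFinset.1 hk)

theorem lt_one_of_mem_spectrum_one_sub_smul {A : Type*} [Ring A] [Algebra ℝ A] {H : A} {γ η : ℝ}
    (hγ : 0 < γ) (hH : ∀ μ ∈ spectrum ℝ H, 0 < μ) (hη : η ∈ spectrum ℝ (1 - γ • H)) : η < 1 := by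
  rw [← map_one (algebraMap ℝ A), ← spectrum.singleton_sub_eq] at hη
  obtain ⟨_, rfl, _, hμ, rfl⟩ := hη
  have := spectrum.unit_smul_eq_smul H (Units.mk0 γ hγ.ne')
  rw [Units.smul_mk0, Units.smul_mk0] at this
  rw [this] at hμ
  obtain ⟨μ, hμ, rfl⟩ := hμ
  simpa using mul_pos hγ (hH μ hμ)

theorem Matrix.mem_spectrum_iff_exists_mulVec_eq_smul {K ι : Type*} [Field K] [Fintype ι]
    [DecidableEq ι] {A : Matrix ι ι K} {μ : K} :
    μ ∈ spectrum K A ↔ ∃ v ≠ 0, A *ᵥ v = μ • v := by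
  rw [← spectrum_toLin', ← Module.End.hasEigenvalue_iff_mem_spectrum]
  refine ⟨fun h => ?_, fun ⟨v, hv, hAv⟩ => ?_⟩
  · obtain ⟨v, hv⟩ := h.exists_hasEigenvector
    exact ⟨v, hv.2, by simpa using hv.apply_eq_smul⟩
  · exact Module.End.hasEigenvalue_of_hasEigenvector
      ⟨Module.End.mem_eigenspace_iff.2 (by simpa using hAv), hv⟩

theorem Matrix.exists_mulVec_of_mem_spectrum_fromBlocks_one_zero {K ι : Type*} [Field K]
    [Fintype ι] [DecidableEq ι] {A B : Matrix ι ι K} {σ : K}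
    (hσ : σ ∈ spectrum K (fromBlocks A B 1 (0 : Matrix ι ι K))) :
    ∃ y ≠ 0, σ ^ 2 • y = σ • A *ᵥ y + B *ᵥ y := by
  obtain ⟨v, hv, hMv⟩ := mem_spectrum_iff_exists_mulVec_eq_smul.1 hσ
  rw [fromBlocks_mulVec, one_mulVec, zero_mulVec, add_zero] at hMv
  have hx : v ∘ Sum.inl = σ • v ∘ Sum.inr := congrArg (· ∘ Sum.inr) hMv
  have hAB : A *ᵥ (v ∘ Sum.inl) + B *ᵥ (v ∘ Sum.inr) = σ • v ∘ Sum.inl :=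
    congrArg (· ∘ Sum.inl) hMv
  refine ⟨v ∘ Sum.inr, fun hy => hv ?_, ?_⟩
  · rw [hy, smul_zero] at hx
    ext (i | i)
    exacts [congrFun hx i, congrFun hy i]
  · rw [hx, mulVec_smul, smul_smul, ← sq] at hAB
    exact hAB.symm

theorem Matrix.IsSymm.isHermitian_map_ofReal {ι : Type*} {G : Matrix ι ι ℝ} (hG : G.IsSymm) :
    (G.map (algebraMap ℝ ℂ)).IsHermitian :=
  (isHermitian_iff_isSymm.2 hG).map _ fun x => (Complex.conj_ofReal x).symm

theorem Matrix.IsSymm.exists_ofReal_of_mem_spectrum_map {ι : Type*} [Fintype ι] [DecidableEq ι]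
    {G : Matrix ι ι ℝ} (hG : G.IsSymm) {w : ℂ}
    (hw : w ∈ spectrum ℂ (G.map (algebraMap ℝ ℂ))) : ∃ η ∈ spectrum ℝ G, (η : ℂ) = w := by
  rw [hG.isHermitian_map_ofReal.spectrum_eq_image_range] at hw
  obtain ⟨_, ⟨i, rfl⟩, rfl⟩ := hw
  exact ⟨_, AlgHom.spectrum_apply_subset ((Algebra.ofId ℝ ℂ).mapMatrix) G
    (hG.isHermitian_map_ofReal.eigenvalues_mem_spectrum_real i), rfl⟩

theorem exists_quadratic_of_mem_spectrum_fromBlocks {ι : Type*} [Fintype ι]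
    [DecidableEq ι] {G : Matrix ι ι ℝ} (hG : G.IsSymm) {α β b : ℝ} {σ : ℂ}
    (hσ : σ ∈ spectrum ℂ ((fromBlocks (α • 1 + β • G) (-(α • 1) - b • G) 1
      (0 : Matrix ι ι ℝ)).map (algebraMap ℝ ℂ))) :
    ∃ η ∈ spectrum ℝ G, σ ^ 2 - ((α + β * η : ℝ) : ℂ) * σ + ((α + b * η : ℝ) : ℂ) = 0 := by
  set Gc := G.map (algebraMap ℝ ℂ)
  have hMc : (fromBlocks (α • 1 + β • G) (-(α • 1) - b • G) 1 (0 : Matrix ι ι ℝ)).map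
      (algebraMap ℝ ℂ) =
        fromBlocks ((α : ℂ) • 1 + (β : ℂ) • Gc) (-((α : ℂ) • 1) - (b : ℂ) • Gc) 1 0 := by
    rw [fromBlocks_map]
    congr 1 <;> ext i j <;> simp [Gc, Matrix.one_apply, apply_ite]
  obtain ⟨y, hy, hσy⟩ := exists_mulVec_of_mem_spectrum_fromBlocks_one_zero (hMc ▸ hσ)
  have key : (σ ^ 2 - α * σ + α) • y = (β * σ - b) • Gc *ᵥ y := by
    ext i
    have := congrFun hσy i
    simp only [add_mulVec, sub_mulVec, neg_mulVec, smul_mulVec, one_mulVec, Pi.add_apply,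
      Pi.sub_apply, Pi.neg_apply, Pi.smul_apply, smul_eq_mul] at this ⊢
    linear_combination this
  suffices ∃ η ∈ spectrum ℝ G, σ ^ 2 - α * σ + α = (β * σ - b) * η by
    obtain ⟨η, hη, h⟩ := this
    exact ⟨η, hη, by push_cast; linear_combination h⟩
  by_cases hc : (β : ℂ) * σ - b = 0
  · obtain ⟨i, -⟩ := Function.ne_iff.1 hy
    have : Nonempty ι := ⟨i⟩
    obtain ⟨w, hw⟩ := spectrum.nonempty_of_isAlgClosed_of_finiteDimensional ℂ Gc
    obtain ⟨η, hη, -⟩ := hG.exists_ofReal_of_mem_spectrum_map hw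
    rw [hc, zero_smul, smul_eq_zero] at key
    exact ⟨η, hη, by rw [key.resolve_right hy, hc, zero_mul]⟩
  · have hw : (σ ^ 2 - α * σ + α) / (β * σ - b) ∈ spectrum ℂ Gc :=
      mem_spectrum_iff_exists_mulVec_eq_smul.2 ⟨y, hy, by
        rw [div_eq_inv_mul, mul_smul, key, smul_smul, inv_mul_cancel₀ hc, one_smul]⟩
    obtain ⟨η, hη, hηw⟩ := hG.exists_ofReal_of_mem_spectrum_map hw
    exact ⟨η, hη, by rw [hηw, mul_div_cancel₀ _ hc]⟩

theorem stmt_6_general (n : ℕ) (L a b γ ηmin : ℝ)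
    (H : Matrix (Fin n) (Fin n) ℝ) (hsymm : H.IsSymm)
    (hspecH : ∀ μ ∈ spectrum ℝ H, 0 < μ ∧ μ ≤ L)
    (hγ : γ ∈ Set.Ioo 0 (2 / L))
    (G : Matrix (Fin n) (Fin n) ℝ)
    (hG : G = (1 : Matrix (Fin n) (Fin n) ℝ) - γ • H)
    (hηmin : IsLeast (spectrum ℝ G) ηmin)
    (ha : a ∈ Set.Ico (0:ℝ) 1) (hb : b ∈ Set.Ico (0:ℝ) 1)
    (hab : (2 * (b - a) - 1) / (1 + 2 * b) < ηmin)
    (M : Matrix (Fin n ⊕ Fin n) (Fin n ⊕ Fin n) ℝ)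
    (hM : M = Matrix.fromBlocks
      ((a - b) • (1 : Matrix (Fin n) (Fin n) ℝ) + (1 + b) • G)
      (-((a - b) • (1 : Matrix (Fin n) (Fin n) ℝ)) - b • G)
      (1 : Matrix (Fin n) (Fin n) ℝ) (0 : Matrix (Fin n) (Fin n) ℝ)) :
    spectralRadius ℂ (M.map (algebraMap ℝ ℂ)) < 1 := by
  have hG_symm : G.IsSymm := by
    rw [hG, IsSymm, transpose_sub, transpose_smul, hsymm.eq, transpose_one]
  have hG_lt_one : ∀ η ∈ spectrum ℝ G, η < 1 := fun η hη =>
    lt_one_of_mem_spectrum_one_sub_smul hγ.1 (fun μ hμ => (hspecH μ hμ).1) (hG ▸ hη)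
  refine spectralRadius_lt_of_forall_nnnorm_lt (finite_spectrum _) one_pos fun σ hσ => ?_
  obtain ⟨η, hη, hση⟩ := exists_quadratic_of_mem_spectrum_fromBlocks hG_symm (hM ▸ hσ)
  have hη_lt_one := hG_lt_one η hη
  have hη_gt : 2 * (b - a) - 1 < (1 + 2 * b) * η := by
    rw [← div_lt_iff₀' (by linarith [hb.1])]
    exact hab.trans_le (hηmin.2 hη)
  rw [← NNReal.coe_lt_coe, coe_nnnorm, NNReal.coe_one]
  exact norm_lt_one_of_sq_sub_mul_add_eq_zero (by nlinarith [ha.2, hb.1]) (by linarith)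
    (by linarith) hση

/-- If `H` is symmetric positive definite with eigenvalues in `(0,L]`, `γ ∈ (0,2/L)`,
`G = I - γH` has smallest eigenvalue `η_min > -1`, and the inertial parameter limits
`a, b ∈ [0,1)` satisfy `(2(b-a) - 1)/(1 + 2b) < η_min`, then the spectral radius of
`M = [[(a-b)I + (1+b)G, -(a-b)I - bG],[I,0]]` is `< 1`. -/
theorem stmt_6 (n : ℕ) (L a b γ ηmin : ℝ) (hLpos : 0 < L)
    (H : Matrix (Fin n) (Fin n) ℝ) (hsymm : H.IsSymm) (hpd : H.PosDef)
    (hspecH : ∀ μ ∈ spectrum ℝ H, 0 < μ ∧ μ ≤ L)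
    (hγ : γ ∈ Set.Ioo 0 (2 / L))
    (G : Matrix (Fin n) (Fin n) ℝ)
    (hG : G = (1 : Matrix (Fin n) (Fin n) ℝ) - γ • H)
    (hηmin : IsLeast (spectrum ℝ G) ηmin) (hηm1 : -1 < ηmin)
    (ha : a ∈ Set.Ico (0:ℝ) 1) (hb : b ∈ Set.Ico (0:ℝ) 1)
    (hab : (2 * (b - a) - 1) / (1 + 2 * b) < ηmin)
    (M : Matrix (Fin n ⊕ Fin n) (Fin n ⊕ Fin n) ℝ)
    (hM : M = Matrix.fromBlocks
      ((a - b) • (1 : Matrix (Fin n) (Fin n) ℝ) + (1 + b) • G)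
      (-((a - b) • (1 : Matrix (Fin n) (Fin n) ℝ)) - b • G)
      (1 : Matrix (Fin n) (Fin n) ℝ) (0 : Matrix (Fin n) (Fin n) ℝ)) :
    spectralRadius ℂ (M.map (algebraMap ℝ ℂ)) < 1 :=
  stmt_6_general n L a b γ ηmin H hsymm hspecH hγ G hG hηmin ha hb hab M hM
end

section
/- Let (Aₖ) be matrices in ℝ^{d×d} converging to A with ρ(A) < 1, (cₖ) vectors (or matrices) in ℝ^{d×m} converging to c, and define D_{k+1} = Aₖ Dₖ + cₖ from an arbitrary D₀. Then Dₖ converges to the unique solution D* = (I − A)⁻¹ c of D = AD + c. -/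
/-!
Let `X = (1 - A)⁻¹ c`, which is the unique fixed point because `1` lies outside the spectrum of
`A`. The errors `e_k = D_k - X` satisfy `e_{k+1} = A_k e_k + b_k` with `b_k → 0`. Gelfand's formula
gives `‖A^N‖ ≤ θ^N` for some `θ < 1` and `N > 0`, and then `ν x = ∑_{i<N} ‖A^i x‖ / θ^i` is a norm
equivalent to `‖·‖` with `ν (A x) ≤ θ ν x`. As `A_k → A`, eventually
`ν e_{k+1} ≤ (1 + θ)/2 · ν e_k + ν b_k`, which forces `e_k → 0`. The iteration is run column by
column in `ℓ^∞`, whose operator norm on matrices is unchanged by complexification.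
-/

open Filter Topology Finset
open scoped NNReal ENNReal

theorem tendsto_zero_of_le_mul_add {q : ℝ} {u v : ℕ → ℝ} (hq₀ : 0 ≤ q) (hq₁ : q < 1)
    (hu : ∀ k, 0 ≤ u k) (hv : Tendsto v atTop (𝓝 0))
    (hrec : ∀ᶠ k in atTop, u (k + 1) ≤ q * u k + v k) :
    Tendsto u atTop (𝓝 0) := by
  refine tendsto_order.2 ⟨fun a ha ↦ .of_forall fun k ↦ ha.trans_le (hu k), fun ε hε ↦ ?_⟩
  have hvε : ∀ᶠ k in atTop, v k ≤ (1 - q) * (ε / 2) :=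
    hv.eventually (ge_mem_nhds (by nlinarith))
  obtain ⟨K, hK⟩ := eventually_atTop.1 (hrec.and hvε)
  have hbound : ∀ n, u (n + K) ≤ q ^ n * u K + ε / 2 := by
    intro n
    induction n with
    | zero => rw [zero_add, pow_zero, one_mul]; linarith
    | succ n ih =>
      obtain ⟨hstep, hvn⟩ := hK (n + K) (Nat.le_add_left K n)
      calc u (n + 1 + K) = u (n + K + 1) := by rw [Nat.add_right_comm]
        _ ≤ q * u (n + K) + v (n + K) := hstep
        _ ≤ q * (q ^ n * u K + ε / 2) + (1 - q) * (ε / 2) := by gcongr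
        _ = q ^ (n + 1) * u K + ε / 2 := by ring
  have hgeom : Tendsto (fun n ↦ q ^ n * u K + ε / 2) atTop (𝓝 (0 * u K + ε / 2)) :=
    ((tendsto_pow_atTop_nhds_zero_of_lt_one hq₀ hq₁).mul_const _).add_const _
  rw [← map_add_atTop_eq_nat K, eventually_map]
  exact (hgeom.eventually (gt_mem_nhds (by linarith))).mono fun n hn ↦ (hbound n).trans_lt hn

section AdaptedNorm

variable {𝕜 V : Type*} [NontriviallyNormedField 𝕜] [SeminormedAddCommGroup V] [NormedSpace 𝕜 V]

noncomputable def adaptedNorm (T : V →L[𝕜] V) (N : ℕ) (θ : ℝ) (x : V) : ℝ :=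
  ∑ i ∈ range N, ‖(T ^ i) x‖ / θ ^ i

variable {T : V →L[𝕜] V} {N : ℕ} {θ : ℝ}

theorem adaptedNorm_nonneg (hθ : 0 ≤ θ) (x : V) : 0 ≤ adaptedNorm T N θ x :=
  sum_nonneg fun i _ ↦ by positivity

theorem norm_le_adaptedNorm (hθ : 0 ≤ θ) (hN : 0 < N) (x : V) : ‖x‖ ≤ adaptedNorm T N θ x := by
  calc ‖x‖ = ‖(T ^ 0) x‖ / θ ^ 0 := by rw [pow_zero, pow_zero, div_one, one_apply_eq_self]
    _ ≤ adaptedNorm T N θ x :=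
      single_le_sum (f := fun i ↦ ‖(T ^ i) x‖ / θ ^ i) (fun i _ ↦ by positivity) (mem_range.2 hN)

theorem adaptedNorm_add_le (hθ : 0 ≤ θ) (x y : V) :
    adaptedNorm T N θ (x + y) ≤ adaptedNorm T N θ x + adaptedNorm T N θ y := by
  rw [adaptedNorm, adaptedNorm, adaptedNorm, ← sum_add_distrib]
  gcongr with i
  rw [← add_div, map_add]
  gcongr
  exact norm_add_le _ _

theorem adaptedNorm_le_mul_norm (hθ : 0 ≤ θ) (x : V) :
    adaptedNorm T N θ x ≤ (∑ i ∈ range N, ‖T ^ i‖ / θ ^ i) * ‖x‖ := by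
  rw [adaptedNorm, sum_mul]
  gcongr with i
  rw [div_mul_eq_mul_div]
  gcongr
  exact (T ^ i).le_opNorm x

theorem adaptedNorm_apply_le (hθ : 0 < θ) (hT : ‖T ^ N‖ ≤ θ ^ N) (x : V) :
    adaptedNorm T N θ (T x) ≤ θ * adaptedNorm T N θ x := by
  set f : ℕ → ℝ := fun i ↦ ‖(T ^ i) x‖ / θ ^ i
  have hfN : f N ≤ f 0 := by
    simp only [f, pow_zero, div_one, one_apply_eq_self]
    rw [div_le_iff₀ (by positivity), mul_comm]
    exact ((T ^ N).le_opNorm x).trans (by gcongr)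
  have hshift : ∑ i ∈ range N, f (i + 1) = adaptedNorm T N θ x + f N - f 0 := by
    have h₁ := sum_range_succ' f N
    have h₂ := sum_range_succ f N
    rw [adaptedNorm]
    linarith
  calc adaptedNorm T N θ (T x) = θ * ∑ i ∈ range N, f (i + 1) := by
        rw [adaptedNorm, mul_sum]
        refine sum_congr rfl fun i _ ↦ ?_
        simp only [f]
        rw [pow_succ, mul_apply_eq_comp, pow_succ]
        field_simp
    _ ≤ θ * adaptedNorm T N θ x := by
        rw [hshift]
        gcongr
        linarith

end AdaptedNorm

section PerturbedIteration

variable {𝕜 V : Type*} [NontriviallyNormedField 𝕜] [SeminormedAddCommGroup V] [NormedSpace 𝕜 V]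
  {T : V →L[𝕜] V} {Ts : ℕ → V →L[𝕜] V} {θ : ℝ} {N : ℕ}

theorem tendsto_zero_of_apply_add {b e : ℕ → V} (hθ₀ : 0 < θ) (hθ₁ : θ < 1) (hN : 0 < N)
    (hT : ‖T ^ N‖ ≤ θ ^ N) (hTs : Tendsto Ts atTop (𝓝 T)) (hb : Tendsto b atTop (𝓝 0))
    (he : ∀ k, e (k + 1) = Ts k (e k) + b k) : Tendsto e atTop (𝓝 0) := by
  set ν := adaptedNorm T N θ
  set M := ∑ i ∈ range N, ‖T ^ i‖ / θ ^ i
  have hM : 0 ≤ M := sum_nonneg fun i _ ↦ by positivity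
  have hν : ∀ x, 0 ≤ ν x := adaptedNorm_nonneg hθ₀.le
  have hνb : Tendsto (fun k ↦ ν (b k)) atTop (𝓝 0) :=
    squeeze_zero (fun k ↦ hν _) (fun k ↦ adaptedNorm_le_mul_norm hθ₀.le _)
      (by simpa using hb.norm.const_mul M)
  have hsmall : ∀ᶠ k in atTop, M * ‖Ts k - T‖ ≤ (1 - θ) / 2 := by
    have := (tendsto_iff_norm_sub_tendsto_zero.1 hTs).const_mul M
    rw [mul_zero] at this
    exact this.eventually (ge_mem_nhds (by linarith))
  have hrec : ∀ᶠ k in atTop, ν (e (k + 1)) ≤ (1 + θ) / 2 * ν (e k) + ν (b k) := by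
    filter_upwards [hsmall] with k hk
    have hperturb : ν ((Ts k - T) (e k)) ≤ M * ‖Ts k - T‖ * ν (e k) :=
      calc ν ((Ts k - T) (e k)) ≤ M * ‖(Ts k - T) (e k)‖ := adaptedNorm_le_mul_norm hθ₀.le _
        _ ≤ M * (‖Ts k - T‖ * ν (e k)) := by
          gcongr
          exact ((Ts k - T).le_opNorm _).trans (by gcongr; exact norm_le_adaptedNorm hθ₀.le hN _)
        _ = M * ‖Ts k - T‖ * ν (e k) := by ring
    calc ν (e (k + 1)) = ν (T (e k) + (Ts k - T) (e k) + b k) := by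
          rw [he, sub_apply, add_sub_cancel]
      _ ≤ ν (T (e k)) + ν ((Ts k - T) (e k)) + ν (b k) := by
          refine (adaptedNorm_add_le hθ₀.le _ _).trans ?_
          gcongr
          exact adaptedNorm_add_le hθ₀.le _ _
      _ ≤ θ * ν (e k) + M * ‖Ts k - T‖ * ν (e k) + ν (b k) := by
          gcongr
          exact adaptedNorm_apply_le hθ₀ hT _
      _ ≤ (1 + θ) / 2 * ν (e k) + ν (b k) := by nlinarith [hν (e k)]
  have hνe := tendsto_zero_of_le_mul_add (by linarith) (by linarith) (fun k ↦ hν _) hνb hrec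
  exact tendsto_zero_iff_norm_tendsto_zero.2 <|
    squeeze_zero (fun k ↦ norm_nonneg _) (fun k ↦ norm_le_adaptedNorm hθ₀.le hN _) hνe

theorem tendsto_of_apply_add {c x : V} {cs xs : ℕ → V} (hθ₀ : 0 < θ) (hθ₁ : θ < 1) (hN : 0 < N)
    (hT : ‖T ^ N‖ ≤ θ ^ N) (hTs : Tendsto Ts atTop (𝓝 T)) (hcs : Tendsto cs atTop (𝓝 c))
    (hx : x = T x + c) (hxs : ∀ k, xs (k + 1) = Ts k (xs k) + cs k) :
    Tendsto xs atTop (𝓝 x) := by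
  have hb : Tendsto (fun k ↦ (Ts k x - T x) + (cs k - c)) atTop (𝓝 0) := by
    have hTx := ((continuous_eval_const x).tendsto T).comp hTs
    simpa using (hTx.sub_const (T x)).add (hcs.sub_const c)
  refine tendsto_sub_nhds_zero_iff.1 (tendsto_zero_of_apply_add hθ₀ hθ₁ hN hT hTs hb fun k ↦ ?_)
  rw [hxs, map_sub]
  nth_rw 1 [hx]
  abel

end PerturbedIteration

theorem eventually_nnnorm_pow_le_of_spectralRadius_lt {A : Type*} [NormedRing A]
    [NormedAlgebra ℂ A] [CompleteSpace A] (a : A) {t : ℝ≥0} (ht : spectralRadius ℂ a < t) :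
    ∀ᶠ n in atTop, ‖a ^ n‖₊ ≤ t ^ n := by
  filter_upwards [(spectrum.pow_nnnorm_pow_one_div_tendsto_nhds_spectralRadius a).eventually
    (gt_mem_nhds ht), eventually_gt_atTop 0] with n hn hn₀
  rw [← ENNReal.coe_rpow_of_nonneg _ (by positivity), ENNReal.coe_lt_coe, one_div,
    NNReal.rpow_inv_lt_iff (by positivity), NNReal.rpow_natCast] at hn
  exact hn.le

theorem isUnit_one_sub_of_spectralRadius_lt_one {𝕜 A : Type*} [NormedField 𝕜] [Ring A]
    [Algebra 𝕜 A] {a : A} (ha : spectralRadius 𝕜 a < 1) : IsUnit (1 - a) := by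
  have h := spectrum.mem_resolventSet_iff.1
    (spectrum.mem_resolventSet_of_spectralRadius_lt (k := (1 : 𝕜)) (by simpa using ha))
  rwa [map_one] at h

namespace Matrix

variable {m n : Type*} [Fintype n]

theorem isUnit_det_one_sub_of_spectralRadius_lt_one [DecidableEq n] {A : Matrix n n ℝ}
    (hA : spectralRadius ℂ (A.map (algebraMap ℝ ℂ)) < 1) : IsUnit (1 - A).det := by
  have h := (isUnit_iff_isUnit_det _).1 (isUnit_one_sub_of_spectralRadius_lt_one hA)
  rwa [← (algebraMap ℝ ℂ).mapMatrix_apply, ← map_one (algebraMap ℝ ℂ).mapMatrix, ← map_sub,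
    ← RingHom.map_det, isUnit_map_iff] at h

theorem eq_mul_add_iff_eq_inv_mul [DecidableEq n] {α : Type*} [CommRing α] {A : Matrix n n α}
    {c X : Matrix n m α} (hA : IsUnit (1 - A).det) : X = A * X + c ↔ X = (1 - A)⁻¹ * c := by
  have hfix : X = A * X + c ↔ (1 - A) * X = c := by
    rw [Matrix.sub_mul, Matrix.one_mul, sub_eq_iff_eq_add']
  rw [hfix]
  constructor
  · rintro rfl
    rw [nonsing_inv_mul_cancel_left _ _ hA]
  · rintro rfl
    exact mul_nonsing_inv_cancel_left _ _ hA

variable {𝕜 : Type*} [NontriviallyNormedField 𝕜]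

noncomputable def mulVecCLM (A : Matrix m n 𝕜) : (n → 𝕜) →L[𝕜] (m → 𝕜) :=
  ContinuousLinearMap.mk (mulVecLin A)

@[simp]
theorem mulVecCLM_apply (A : Matrix m n 𝕜) (v : n → 𝕜) : mulVecCLM A v = A *ᵥ v := rfl

theorem mulVecCLM_sub (A B : Matrix m n 𝕜) : mulVecCLM (A - B) = mulVecCLM A - mulVecCLM B := by
  ext1 v
  simp [sub_mulVec]

theorem mulVecCLM_pow [DecidableEq n] (A : Matrix n n 𝕜) (k : ℕ) :
    mulVecCLM A ^ k = mulVecCLM (A ^ k) := by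
  induction k with
  | zero => ext1 v; simp [one_apply_eq_self]
  | succ k ih => ext1 v; rw [pow_succ, mul_apply_eq_comp, ih, pow_succ]; simp

section LinftyOpNorm

attribute [local instance] Matrix.linftyOpSeminormedAddCommGroup Matrix.linftyOpNormedRing
  Matrix.linftyOpNormedAlgebra

variable [Fintype m]

theorem linfty_opNNNorm_map {α β : Type*} [SeminormedAddCommGroup α] [SeminormedAddCommGroup β]
    {f : α → β} (hf : ∀ x, ‖f x‖₊ = ‖x‖₊) (A : Matrix m n α) : ‖A.map f‖₊ = ‖A‖₊ := by
  simp [linfty_opNNNorm_def, hf]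

theorem norm_mulVecCLM (A : Matrix m n ℝ) : ‖mulVecCLM A‖ = ‖A‖ :=
  (linfty_opNorm_eq_opNorm A).symm

theorem tendsto_mulVecCLM {A : Matrix m n ℝ} {As : ℕ → Matrix m n ℝ}
    (hAs : Tendsto As atTop (𝓝 A)) :
    Tendsto (fun k ↦ mulVecCLM (As k)) atTop (𝓝 (mulVecCLM A)) := by
  refine tendsto_iff_norm_sub_tendsto_zero.2 ?_
  simpa only [← mulVecCLM_sub, norm_mulVecCLM] using tendsto_iff_norm_sub_tendsto_zero.1 hAs

theorem exists_norm_mulVecCLM_pow_le [DecidableEq n] {A : Matrix n n ℝ}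
    (hA : spectralRadius ℂ (A.map (algebraMap ℝ ℂ)) < 1) :
    ∃ θ : ℝ, 0 < θ ∧ θ < 1 ∧ ∃ N, 0 < N ∧ ‖mulVecCLM A ^ N‖ ≤ θ ^ N := by
  obtain ⟨θ, hAθ, hθ₁⟩ := ENNReal.lt_iff_exists_nnreal_btwn.1 hA
  obtain ⟨N, hN, hN₀⟩ :=
    ((eventually_nnnorm_pow_le_of_spectralRadius_lt _ hAθ).and (eventually_gt_atTop 0)).exists
  refine ⟨θ, ENNReal.coe_pos.1 (hAθ.trans_le' bot_le), by exact_mod_cast hθ₁, N, hN₀, ?_⟩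
  rw [← Matrix.map_pow, linfty_opNNNorm_map (fun x ↦ by simp)] at hN
  rw [mulVecCLM_pow, norm_mulVecCLM]
  exact_mod_cast hN

end LinftyOpNorm

variable [DecidableEq n] {A : Matrix n n ℝ} {As : ℕ → Matrix n n ℝ}

theorem tendsto_of_mulVec_add {c x : n → ℝ} {cs xs : ℕ → n → ℝ} (hAs : Tendsto As atTop (𝓝 A))
    (hA : spectralRadius ℂ (A.map (algebraMap ℝ ℂ)) < 1) (hcs : Tendsto cs atTop (𝓝 c))
    (hx : x = A *ᵥ x + c) (hxs : ∀ k, xs (k + 1) = As k *ᵥ xs k + cs k) :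
    Tendsto xs atTop (𝓝 x) := by
  obtain ⟨θ, hθ₀, hθ₁, N, hN, hpow⟩ := exists_norm_mulVecCLM_pow_le hA
  exact tendsto_of_apply_add hθ₀ hθ₁ hN hpow (tendsto_mulVecCLM hAs) hcs hx hxs

theorem tendsto_of_mul_add {c X : Matrix n m ℝ} {cs D : ℕ → Matrix n m ℝ}
    (hAs : Tendsto As atTop (𝓝 A)) (hA : spectralRadius ℂ (A.map (algebraMap ℝ ℂ)) < 1)
    (hcs : Tendsto cs atTop (𝓝 c)) (hX : X = A * X + c)
    (hD : ∀ k, D (k + 1) = As k * D k + cs k) :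
    Tendsto D atTop (𝓝 X) := by
  have hcol : ∀ j, Tendsto (fun k i ↦ D k i j) atTop (𝓝 fun i ↦ X i j) := fun j ↦
    tendsto_of_mulVec_add hAs hA
      (tendsto_pi_nhds.2 fun i ↦ tendsto_pi_nhds.1 (tendsto_pi_nhds.1 hcs i) j)
      (funext fun i ↦ congrFun₂ hX i j) fun k ↦ funext fun i ↦ congrFun₂ (hD k) i j
  exact tendsto_pi_nhds.2 fun i ↦ tendsto_pi_nhds.2 fun j ↦ tendsto_pi_nhds.1 (hcol j) i

end Matrix

/-- Linear recursion with converging coefficients: if `Aₖ → A` with `ρ(A) < 1` and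
`cₖ → c`, then the iterates `D_{k+1} = AₖDₖ + cₖ` converge, from any `D₀`, to the
unique solution `D* = (I - A)⁻¹ c` of `D = AD + c`. -/
theorem stmt_11 (d m : ℕ)
    (A : Matrix (Fin d) (Fin d) ℝ) (Aseq : ℕ → Matrix (Fin d) (Fin d) ℝ)
    (hA : Tendsto Aseq atTop (nhds A))
    (hρ : spectralRadius ℂ (A.map (algebraMap ℝ ℂ)) < 1)
    (c : Matrix (Fin d) (Fin m) ℝ) (cseq : ℕ → Matrix (Fin d) (Fin m) ℝ)
    (hc : Tendsto cseq atTop (nhds c))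
    (D : ℕ → Matrix (Fin d) (Fin m) ℝ)
    (hD : ∀ k, D (k + 1) = Aseq k * D k + cseq k) :
    Tendsto D atTop (nhds (((1 : Matrix (Fin d) (Fin d) ℝ) - A)⁻¹ * c)) ∧
    ∀ D' : Matrix (Fin d) (Fin m) ℝ, D' = A * D' + c →
      D' = ((1 : Matrix (Fin d) (Fin d) ℝ) - A)⁻¹ * c := by
  have hfix := fun X ↦ Matrix.eq_mul_add_iff_eq_inv_mul (X := X) (c := c)
    (Matrix.isUnit_det_one_sub_of_spectralRadius_lt_one hρ)
  exact ⟨Matrix.tendsto_of_mul_add hA hρ hc ((hfix _).2 rfl) hD, fun D' ↦ (hfix D').1⟩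
end
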